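/- A complex-valued harmonic function f on 𝔻 satisfies sup_{z≠w} |f(z)-f(w)|/σ(z,w) < ∞ if and only if sup_{z∈𝔻}(1-|z|²)Λ_f(z) < ∞, where σ(z,w) = arctanh(ρ(z,w)) is the hyperbolic distance and ρ(z,w) = |(z-w)/(1-w̄z)|. -/

import Mathlib

/-!
Write `ρ` for the pseudo-hyperbolic distance and `Df` for the real differential of `f`.
If `(1 - |u|²) ‖Df(u)‖ ≤ M` on the disc, integrating along the radius from `0` to `ζ` gives
`|f(ζ) - f(0)| ≤ M artanh |ζ|`. The automorphism `u ↦ (u + w) / (1 + w̄ u)` preserves the quantity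
`(1 - |u|²) ‖Df(u)‖`, sends `0` to `w` and `ζ = (z - w) / (1 - w̄ z)` to `z`, which gives
`|f(z) - f(w)| ≤ M artanh ρ(z, w)`. Conversely, near `z` we have
`artanh ρ(u, z) ≈ |u - z| / (1 - |z|²)`, so a bound `|f(u) - f(z)| ≤ M artanh ρ(u, z)` makes `f`
locally Lipschitz with constant about `M / (1 - |z|²)` and bounds `‖Df(z)‖`. For `f = h + ḡ` the
differential is `v ↦ h' v + conj (g' v)`, whose norm lies between `Λ_f / 2` and `Λ_f`.
-/

open Complex Metric Set Filter Topology
open scoped ComplexConjugate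

namespace Real

theorem hasDerivAt_artanh {x : ℝ} (hx : x ∈ Ioo (-1) 1) :
    HasDerivAt artanh (1 - x ^ 2)⁻¹ x := by
  have h1 : 0 < 1 + x := by linarith [hx.1]
  have h2 : 0 < 1 - x := by linarith [hx.2]
  have hlog : HasDerivAt (fun y => 1 / 2 * (log (1 + y) - log (1 - y)))
      (1 / 2 * (1 / (1 + x) - -1 / (1 - x))) x :=
    ((((hasDerivAt_id x).const_add 1).log h1.ne').sub
      (((hasDerivAt_id x).const_sub 1).log h2.ne')).const_mul _
  refine (hlog.congr_deriv ?_).congr_of_eventuallyEq ?_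
  · have : 1 - x ^ 2 ≠ 0 := by nlinarith
    field_simp
    ring
  · filter_upwards [Ioo_mem_nhds hx.1 hx.2] with y hy
    rw [artanh_eq_half_log (Ioo_subset_Icc_self hy),
      log_div (by linarith [hy.1]) (by linarith [hy.2])]

theorem artanh_le_div_one_sub {x : ℝ} (h0 : 0 ≤ x) (h1 : x < 1) : artanh x ≤ x / (1 - x) := by
  have hpos : 0 < (1 + x) / (1 - x) := div_pos (by linarith) (by linarith)
  rw [artanh_eq_half_log ⟨by linarith, h1.le⟩]
  have := log_le_sub_one_of_pos hpos
  have : (1 + x) / (1 - x) - 1 = 2 * (x / (1 - x)) := by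
    field_simp [(by linarith : 1 - x ≠ 0)]
    ring
  linarith

end Real

theorem norm_add_norm_le_norm_add_add_norm_sub {E : Type*} [SeminormedAddCommGroup E]
    [NormedSpace ℝ E] (a b : E) : ‖a‖ + ‖b‖ ≤ ‖a + b‖ + ‖a - b‖ := by
  have ha := norm_add_le (a + b) (a - b)
  have hb := norm_sub_le (a + b) (a - b)
  rw [show a + b + (a - b) = (2 : ℝ) • a by rw [two_smul]; abel, norm_smul] at ha
  rw [show a + b - (a - b) = (2 : ℝ) • b by rw [two_smul]; abel, norm_smul] at hb
  norm_num at ha hb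
  linarith

/-- The real differential of a map with Wirtinger derivatives `f_z = a` and `f_z̄ = c`. -/
noncomputable def wirtingerCLM (a c : ℂ) : ℂ →L[ℝ] ℂ := a • 1 + c • (conjCLE : ℂ →L[ℝ] ℂ)

@[simp] theorem wirtingerCLM_apply (a c v : ℂ) : wirtingerCLM a c v = a * v + c * conj v := rfl

theorem norm_wirtingerCLM_le (a c : ℂ) : ‖wirtingerCLM a c‖ ≤ ‖a‖ + ‖c‖ :=
  ContinuousLinearMap.opNorm_le_bound _ (by positivity) fun v => by
    calc ‖a * v + c * conj v‖ ≤ ‖a * v‖ + ‖c * conj v‖ := norm_add_le _ _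
      _ = (‖a‖ + ‖c‖) * ‖v‖ := by simp; ring

theorem norm_add_norm_le_two_mul_norm_wirtingerCLM (a c : ℂ) :
    ‖a‖ + ‖c‖ ≤ 2 * ‖wirtingerCLM a c‖ := by
  have h1 : ‖a + c‖ ≤ ‖wirtingerCLM a c‖ := by
    simpa using (wirtingerCLM a c).le_opNorm 1
  have hI : ‖a - c‖ ≤ ‖wirtingerCLM a c‖ := by
    simpa [conj_I, ← sub_eq_add_neg, ← sub_mul] using (wirtingerCLM a c).le_opNorm I
  linarith [norm_add_norm_le_norm_add_add_norm_sub a c]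

theorem hasFDerivAt_add_conj {h g : ℂ → ℂ} {a b z : ℂ} (hh : HasDerivAt h a z)
    (hg : HasDerivAt g b z) :
    HasFDerivAt (fun u => h u + conj (g u)) (wirtingerCLM a (conj b)) z :=
  ((hh.hasFDerivAt.restrictScalars ℝ).add (hg.hasFDerivAt.restrictScalars ℝ).star).congr_fderiv
    (ContinuousLinearMap.ext fun v => by simp [mul_comm])

open Real in
theorem norm_sub_le_mul_artanh_of_forall_norm_fderiv_le {V E : Type*} [NormedAddCommGroup V]
    [NormedSpace ℝ V] [NormedAddCommGroup E] [NormedSpace ℝ E] {F : V → E} {F' : V → V →L[ℝ] E}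
    {M : ℝ} (hF : ∀ u ∈ ball (0 : V) 1, HasFDerivAt F (F' u) u)
    (hM : ∀ u ∈ ball (0 : V) 1, (1 - ‖u‖ ^ 2) * ‖F' u‖ ≤ M) {ζ : V} (hζ : ζ ∈ ball 0 1) :
    ‖F ζ - F 0‖ ≤ M * artanh ‖ζ‖ := by
  set r := ‖ζ‖
  have hr : r < 1 := mem_ball_zero_iff.mp hζ
  have hr0 : 0 ≤ r := norm_nonneg ζ
  have hmem : ∀ t ∈ Icc (0 : ℝ) 1, t • ζ ∈ ball (0 : V) 1 ∧ t * r ∈ Ioo (-1) 1 := by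
    intro t ⟨ht0, ht1⟩
    have : t * r ≤ r := mul_le_of_le_one_left hr0 ht1
    refine ⟨?_, by constructor <;> nlinarith⟩
    rw [mem_ball_zero_iff, norm_smul, norm_of_nonneg ht0]
    linarith
  have hΦ : ∀ t ∈ Icc (0 : ℝ) 1, HasDerivAt (fun s : ℝ => F (s • ζ) - F 0) (F' (t • ζ) ζ) t :=
    fun t ht => by
      simpa using ((hF _ (hmem t ht).1).comp_hasDerivAt t
        ((hasDerivAt_id t).smul_const ζ)).sub_const (F 0)
  have hB : ∀ t ∈ Icc (0 : ℝ) 1,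
      HasDerivAt (fun s => M * artanh (s * r)) (M * ((1 - (t * r) ^ 2)⁻¹ * r)) t :=
    fun t ht => by
      simpa using ((hasDerivAt_artanh (hmem t ht).2).comp t
        ((hasDerivAt_id t).mul_const r)).const_mul M
  have hbound : ∀ t ∈ Ico (0 : ℝ) 1, ‖F' (t • ζ) ζ‖ ≤ M * ((1 - (t * r) ^ 2)⁻¹ * r) := by
    intro t ht
    have ht' := Ico_subset_Icc_self ht
    have hden : 0 < 1 - (t * r) ^ 2 := by
      have := (hmem t ht').2; nlinarith [this.1, this.2]
    have hnorm : ‖t • ζ‖ = t * r := by rw [norm_smul, norm_of_nonneg ht.1]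
    have hF' : ‖F' (t • ζ)‖ ≤ M * (1 - (t * r) ^ 2)⁻¹ := by
      rw [← div_eq_mul_inv, le_div_iff₀ hden, mul_comm, ← hnorm]
      exact hM _ (hmem t ht').1
    calc ‖F' (t • ζ) ζ‖ ≤ ‖F' (t • ζ)‖ * r := (F' (t • ζ)).le_opNorm ζ
      _ ≤ M * (1 - (t * r) ^ 2)⁻¹ * r := mul_le_mul_of_nonneg_right hF' hr0
      _ = _ := by ring
  have key := image_norm_le_of_norm_deriv_right_le_deriv_boundary'
    (fun t ht => (hΦ t ht).continuousAt.continuousWithinAt)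
    (fun t ht => (hΦ t (Ico_subset_Icc_self ht)).hasDerivWithinAt)
    (by simp) (fun t ht => (hB t ht).continuousAt.continuousWithinAt)
    (fun t ht => (hB t (Ico_subset_Icc_self ht)).hasDerivWithinAt) hbound
    (right_mem_Icc.mpr zero_le_one)
  simpa using key

noncomputable def pseudoHyperbolicDist (z w : ℂ) : ℝ := ‖(z - w) / (1 - conj w * z)‖

noncomputable def diskMobius (w u : ℂ) : ℂ := (u + w) / (1 + conj w * u)

theorem norm_one_add_conj_mul_sq_sub_norm_add_sq (w u : ℂ) :
    ‖1 + conj w * u‖ ^ 2 - ‖u + w‖ ^ 2 = (1 - ‖w‖ ^ 2) * (1 - ‖u‖ ^ 2) := by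
  simp only [← normSq_eq_norm_sq, normSq_apply, add_re, add_im, mul_re, mul_im, one_re, one_im,
    conj_re, conj_im]
  ring

section Disk

variable {z w u : ℂ}

theorem one_add_conj_mul_ne_zero (hw : w ∈ ball (0 : ℂ) 1) (hu : u ∈ ball (0 : ℂ) 1) :
    1 + conj w * u ≠ 0 := by
  rw [mem_ball_zero_iff] at hw hu
  intro h
  have : ‖conj w * u‖ < 1 := by
    rw [norm_mul, norm_conj]; nlinarith [norm_nonneg w, norm_nonneg u]
  rw [eq_neg_of_add_eq_zero_right h, norm_neg, norm_one] at this
  exact this.false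

theorem norm_add_lt_norm_one_add_conj_mul (hw : w ∈ ball (0 : ℂ) 1) (hu : u ∈ ball (0 : ℂ) 1) :
    ‖u + w‖ < ‖1 + conj w * u‖ := by
  have key := norm_one_add_conj_mul_sq_sub_norm_add_sq w u
  rw [mem_ball_zero_iff] at hw hu
  have : 0 < (1 - ‖w‖ ^ 2) * (1 - ‖u‖ ^ 2) := by
    apply mul_pos <;> nlinarith [norm_nonneg w, norm_nonneg u]
  exact lt_of_pow_lt_pow_left₀ 2 (norm_nonneg _) (by linarith)

theorem one_sub_conj_mul_ne_zero (hw : w ∈ ball (0 : ℂ) 1) (hz : z ∈ ball (0 : ℂ) 1) :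
    1 - conj w * z ≠ 0 := by
  have hz' : -z ∈ ball (0 : ℂ) 1 := by simpa using hz
  simpa [← sub_eq_add_neg] using one_add_conj_mul_ne_zero hw hz'

theorem diskMobius_mem_ball (hw : w ∈ ball (0 : ℂ) 1) (hu : u ∈ ball (0 : ℂ) 1) :
    diskMobius w u ∈ ball (0 : ℂ) 1 := by
  rw [mem_ball_zero_iff, diskMobius, norm_div,
    div_lt_one (norm_pos_iff.mpr (one_add_conj_mul_ne_zero hw hu))]
  exact norm_add_lt_norm_one_add_conj_mul hw hu

theorem one_sub_norm_diskMobius_sq (hw : w ∈ ball (0 : ℂ) 1) (hu : u ∈ ball (0 : ℂ) 1) :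
    1 - ‖diskMobius w u‖ ^ 2 = (1 - ‖w‖ ^ 2) * (1 - ‖u‖ ^ 2) / ‖1 + conj w * u‖ ^ 2 := by
  have hne := norm_pos_iff.mpr (one_add_conj_mul_ne_zero hw hu)
  rw [diskMobius, norm_div, div_pow, ← norm_one_add_conj_mul_sq_sub_norm_add_sq, sub_div,
    div_self (by positivity)]

theorem hasDerivAt_diskMobius (hw : w ∈ ball (0 : ℂ) 1) (hu : u ∈ ball (0 : ℂ) 1) :
    HasDerivAt (diskMobius w) ((1 - conj w * w) / (1 + conj w * u) ^ 2) u := by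
  have := ((hasDerivAt_id u).add_const w).div ((hasDerivAt_id u).const_mul (conj w) |>.const_add 1)
    (one_add_conj_mul_ne_zero hw hu)
  refine this.congr_deriv ?_
  simp only [id, mul_one]
  ring

theorem one_sub_norm_sq_mul_norm_deriv_diskMobius (hw : w ∈ ball (0 : ℂ) 1)
    (hu : u ∈ ball (0 : ℂ) 1) :
    (1 - ‖u‖ ^ 2) * ‖(1 - conj w * w) / (1 + conj w * u) ^ 2‖ = 1 - ‖diskMobius w u‖ ^ 2 := by
  have hw1 : ‖w‖ < 1 := mem_ball_zero_iff.mp hw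
  rw [one_sub_norm_diskMobius_sq hw hu, conj_mul', norm_div, norm_pow,
    show (1 : ℂ) - (‖w‖ : ℂ) ^ 2 = ((1 - ‖w‖ ^ 2 : ℝ) : ℂ) by push_cast; ring, norm_real,
    Real.norm_of_nonneg (by nlinarith [norm_nonneg w])]
  ring

theorem diskMobius_self_zero : diskMobius w 0 = w := by simp [diskMobius]

theorem pseudoHyperbolicDist_lt_one (hz : z ∈ ball (0 : ℂ) 1) (hw : w ∈ ball (0 : ℂ) 1) :
    pseudoHyperbolicDist z w < 1 := by
  have hz' : -z ∈ ball (0 : ℂ) 1 := by simpa using hz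
  have := norm_add_lt_norm_one_add_conj_mul hw hz'
  rw [show -z + w = -(z - w) by ring, norm_neg, show 1 + conj w * -z = 1 - conj w * z by ring]
    at this
  rw [pseudoHyperbolicDist, norm_div, div_lt_one ((norm_nonneg _).trans_lt this)]
  exact this

theorem diskMobius_div (hz : z ∈ ball (0 : ℂ) 1) (hw : w ∈ ball (0 : ℂ) 1) :
    diskMobius w ((z - w) / (1 - conj w * z)) = z := by
  have hne := one_sub_conj_mul_ne_zero hw hz
  have hζ : (z - w) / (1 - conj w * z) ∈ ball (0 : ℂ) 1 := by
    simpa [pseudoHyperbolicDist] using pseudoHyperbolicDist_lt_one hz hw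
  rw [diskMobius, div_eq_iff (one_add_conj_mul_ne_zero hw hζ)]
  linear_combination div_mul_cancel₀ (z - w) hne

end Disk

section HyperbolicLipschitz

variable {E : Type*} [NormedAddCommGroup E] [NormedSpace ℝ E] {F : ℂ → E} {F' : ℂ → ℂ →L[ℝ] E}
  {M : ℝ}

theorem norm_sub_le_mul_artanh_pseudoHyperbolicDist
    (hF : ∀ u ∈ ball (0 : ℂ) 1, HasFDerivAt F (F' u) u)
    (hM : ∀ u ∈ ball (0 : ℂ) 1, (1 - ‖u‖ ^ 2) * ‖F' u‖ ≤ M) {z w : ℂ} (hz : z ∈ ball (0 : ℂ) 1)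
    (hw : w ∈ ball (0 : ℂ) 1) :
    ‖F z - F w‖ ≤ M * Real.artanh (pseudoHyperbolicDist z w) := by
  set d : ℂ → ℂ := fun u => (1 - conj w * w) / (1 + conj w * u) ^ 2
  set D : ℂ → ℂ →L[ℝ] ℂ := fun u => (ContinuousLinearMap.toSpanSingleton ℂ (d u)).restrictScalars ℝ
  have hG : ∀ u ∈ ball (0 : ℂ) 1,
      HasFDerivAt (F ∘ diskMobius w) ((F' (diskMobius w u)).comp (D u)) u :=
    fun u hu => (hF _ (diskMobius_mem_ball hw hu)).comp u
      ((hasDerivAt_diskMobius hw hu).hasFDerivAt.restrictScalars ℝ)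
  have hGM : ∀ u ∈ ball (0 : ℂ) 1, (1 - ‖u‖ ^ 2) * ‖(F' (diskMobius w u)).comp (D u)‖ ≤ M := by
    intro u hu
    have hu0 : 0 ≤ 1 - ‖u‖ ^ 2 := by nlinarith [mem_ball_zero_iff.mp hu, norm_nonneg u]
    calc _ ≤ (1 - ‖u‖ ^ 2) * (‖F' (diskMobius w u)‖ * ‖d u‖) := by
          gcongr
          refine (ContinuousLinearMap.opNorm_comp_le _ _).trans_eq ?_
          rw [ContinuousLinearMap.norm_restrictScalars, ContinuousLinearMap.norm_toSpanSingleton]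
      _ = (1 - ‖diskMobius w u‖ ^ 2) * ‖F' (diskMobius w u)‖ := by
          rw [← one_sub_norm_sq_mul_norm_deriv_diskMobius hw hu]; ring
      _ ≤ M := hM _ (diskMobius_mem_ball hw hu)
  have hζ : (z - w) / (1 - conj w * z) ∈ ball (0 : ℂ) 1 := by
    simpa [pseudoHyperbolicDist] using pseudoHyperbolicDist_lt_one hz hw
  have key := norm_sub_le_mul_artanh_of_forall_norm_fderiv_le hG hGM hζ
  rwa [Function.comp_apply, Function.comp_apply, diskMobius_div hz hw, diskMobius_self_zero] at key

theorem one_sub_norm_sq_mul_norm_fderiv_le_of_norm_sub_le (hM0 : 0 ≤ M)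
    (hM : ∀ z ∈ ball (0 : ℂ) 1, ∀ w ∈ ball (0 : ℂ) 1,
      ‖F z - F w‖ ≤ M * Real.artanh (pseudoHyperbolicDist z w))
    {z : ℂ} (hz : z ∈ ball (0 : ℂ) 1) {L : ℂ →L[ℝ] E} (hF : HasFDerivAt F L z) :
    (1 - ‖z‖ ^ 2) * ‖L‖ ≤ 2 * M := by
  set c := 1 - ‖z‖ ^ 2 with hc_def
  have hc : 0 < c := by nlinarith [mem_ball_zero_iff.mp hz, norm_nonneg z]
  have hzz : 1 - conj z * z ≠ 0 := one_sub_conj_mul_ne_zero hz hz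
  have hcont : ContinuousAt (fun u => (1 - pseudoHyperbolicDist u z) * ‖1 - conj z * u‖) z := by
    unfold pseudoHyperbolicDist
    fun_prop (disch := exact hzz)
  have hval : (1 - pseudoHyperbolicDist z z) * ‖1 - conj z * z‖ = c := by
    rw [conj_mul', show (1 : ℂ) - (‖z‖ : ℂ) ^ 2 = (c : ℂ) by rw [hc_def]; push_cast; ring,
      norm_real, Real.norm_of_nonneg hc.le]
    simp [pseudoHyperbolicDist]
  -- `artanh ρ(u, z) ≤ ‖u - z‖ / ((1 - ρ(u, z)) ‖1 - z̄ u‖)`, and this denominator tends to `c`.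
  have hev : ∀ᶠ u in 𝓝 z, u ∈ ball (0 : ℂ) 1 ∧
      c / 2 < (1 - pseudoHyperbolicDist u z) * ‖1 - conj z * u‖ :=
    (isOpen_ball.eventually_mem hz).and (continuousAt_const.eventually_lt hcont (by linarith))
  have hlip : ‖L‖ ≤ 2 * M / c := by
    refine hF.le_of_lip' (by positivity) (hev.mono fun u ⟨hu, hq⟩ => ?_)
    set ρ := pseudoHyperbolicDist u z
    have hρ0 : 0 ≤ ρ := norm_nonneg _
    have hρ1 : ρ < 1 := pseudoHyperbolicDist_lt_one hu hz
    have hne : ‖1 - conj z * u‖ ≠ 0 := by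
      rintro h; rw [h, mul_zero] at hq; linarith
    have hdist : ‖u - z‖ = ρ * ‖1 - conj z * u‖ := by
      show ‖u - z‖ = ‖(u - z) / (1 - conj z * u)‖ * _
      rw [norm_div, div_mul_cancel₀ _ hne]
    have hq' : 1 ≤ 2 / c * ((1 - ρ) * ‖1 - conj z * u‖) := by
      rw [div_mul_eq_mul_div, le_div_iff₀ hc]; linarith
    calc ‖F u - F z‖ ≤ M * Real.artanh ρ := hM u hu z hz
      _ ≤ M * (ρ / (1 - ρ)) := by gcongr; exact Real.artanh_le_div_one_sub hρ0 hρ1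
      _ ≤ M * (2 / c * ‖u - z‖) := by
          gcongr
          rw [div_le_iff₀ (by linarith), hdist]
          calc ρ = ρ * 1 := (mul_one ρ).symm
            _ ≤ ρ * (2 / c * ((1 - ρ) * ‖1 - conj z * u‖)) := by gcongr
            _ = 2 / c * (ρ * ‖1 - conj z * u‖) * (1 - ρ) := by ring
      _ = 2 * M / c * ‖u - z‖ := by ring
  calc c * ‖L‖ ≤ c * (2 * M / c) := by gcongr
    _ = 2 * M := by field_simp

end HyperbolicLipschitz

theorem bddAbove_norm_sub_div_half_log_iff {E : Type*} [SeminormedAddCommGroup E] {F : ℂ → E} :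
    BddAbove {y : ℝ | ∃ z ∈ ball (0 : ℂ) 1, ∃ w ∈ ball (0 : ℂ) 1, z ≠ w ∧ y = ‖F z - F w‖ /
      (1 / 2 * Real.log ((1 + ‖(z - w) / (1 - conj w * z)‖) / (1 - ‖(z - w) / (1 - conj w * z)‖)))}
    ↔ ∃ M, 0 ≤ M ∧ ∀ z ∈ ball (0 : ℂ) 1, ∀ w ∈ ball (0 : ℂ) 1,
      ‖F z - F w‖ ≤ M * Real.artanh (pseudoHyperbolicDist z w) := by
  have hσ : ∀ z ∈ ball (0 : ℂ) 1, ∀ w ∈ ball (0 : ℂ) 1,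
      1 / 2 * Real.log ((1 + ‖(z - w) / (1 - conj w * z)‖) / (1 - ‖(z - w) / (1 - conj w * z)‖))
        = Real.artanh (pseudoHyperbolicDist z w) := fun z hz w hw => by
    have : 0 ≤ pseudoHyperbolicDist z w := norm_nonneg _
    exact (Real.artanh_eq_half_log ⟨by linarith, (pseudoHyperbolicDist_lt_one hz hw).le⟩).symm
  have hpos : ∀ z ∈ ball (0 : ℂ) 1, ∀ w ∈ ball (0 : ℂ) 1, z ≠ w →
      0 < Real.artanh (pseudoHyperbolicDist z w) := fun z hz w hw hne =>
    Real.artanh_pos ⟨norm_pos_iff.mpr (div_ne_zero (sub_ne_zero.mpr hne)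
      (one_sub_conj_mul_ne_zero hw hz)), pseudoHyperbolicDist_lt_one hz hw⟩
  constructor
  · rintro ⟨M, hM⟩
    refine ⟨max M 0, le_max_right M 0, fun z hz w hw => ?_⟩
    obtain rfl | hne := eq_or_ne z w
    · simp [pseudoHyperbolicDist]
    have hzw := hM ⟨z, hz, w, hw, hne, rfl⟩
    rw [hσ z hz w hw, div_le_iff₀ (hpos z hz w hw hne)] at hzw
    exact hzw.trans (by gcongr; exacts [(hpos z hz w hw hne).le, le_max_left M 0])
  · rintro ⟨M, -, hM⟩
    refine ⟨M, ?_⟩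
    rintro _ ⟨z, hz, w, hw, hne, rfl⟩
    rw [hσ z hz w hw, div_le_iff₀ (hpos z hz w hw hne)]
    exact hM z hz w hw

theorem statement14 (h g : ℂ → ℂ) (f : ℂ → ℂ)
    (hf : ∀ z, f z = h z + (starRingEnd ℂ) (g z))
    (hh : DifferentiableOn ℂ h (Metric.ball 0 1))
    (hg : DifferentiableOn ℂ g (Metric.ball 0 1)) :
    BddAbove {y : ℝ | ∃ z ∈ Metric.ball (0 : ℂ) 1, ∃ w ∈ Metric.ball (0 : ℂ) 1,
      z ≠ w ∧ y = ‖f z - f w‖ /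
        (1 / 2 * Real.log ((1 + ‖(z - w) / (1 - (starRingEnd ℂ) w * z)‖) / (1 - ‖(z - w) / (1 - (starRingEnd ℂ) w * z)‖)))}
    ↔
    BddAbove {y : ℝ | ∃ z ∈ Metric.ball (0 : ℂ) 1,
      y = (1 - ‖z‖ ^ 2) *
        (‖deriv h z‖ + ‖deriv g z‖)} := by
  have hD : ∀ u ∈ ball (0 : ℂ) 1,
      HasFDerivAt f (wirtingerCLM (deriv h u) (conj (deriv g u))) u := fun u hu => by
    rw [show f = _ from funext hf]
    exact hasFDerivAt_add_conj (hh.differentiableAt (isOpen_ball.mem_nhds hu)).hasDerivAt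
      (hg.differentiableAt (isOpen_ball.mem_nhds hu)).hasDerivAt
  rw [bddAbove_norm_sub_div_half_log_iff]
  constructor
  · rintro ⟨M, hM0, hM⟩
    refine ⟨4 * M, ?_⟩
    rintro _ ⟨z, hz, rfl⟩
    have hz0 : 0 ≤ 1 - ‖z‖ ^ 2 := by nlinarith [mem_ball_zero_iff.mp hz, norm_nonneg z]
    have hΛ := norm_add_norm_le_two_mul_norm_wirtingerCLM (deriv h z) (conj (deriv g z))
    rw [norm_conj] at hΛ
    calc (1 - ‖z‖ ^ 2) * (‖deriv h z‖ + ‖deriv g z‖)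
        ≤ 2 * ((1 - ‖z‖ ^ 2) * ‖wirtingerCLM (deriv h z) (conj (deriv g z))‖) := by
          nlinarith
      _ ≤ 2 * (2 * M) := by
          linarith [one_sub_norm_sq_mul_norm_fderiv_le_of_norm_sub_le hM0 hM hz (hD z hz)]
      _ = 4 * M := by ring
  · rintro ⟨M, hM⟩
    have hbloch : ∀ u ∈ ball (0 : ℂ) 1,
        (1 - ‖u‖ ^ 2) * ‖wirtingerCLM (deriv h u) (conj (deriv g u))‖ ≤ M := fun u hu => by
      have hu0 : 0 ≤ 1 - ‖u‖ ^ 2 := by nlinarith [mem_ball_zero_iff.mp hu, norm_nonneg u]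
      refine le_trans ?_ (hM ⟨u, hu, rfl⟩)
      gcongr
      simpa using norm_wirtingerCLM_le (deriv h u) (conj (deriv g u))
    refine ⟨M, ?_, fun z hz w hw => norm_sub_le_mul_artanh_pseudoHyperbolicDist hD hbloch hz hw⟩
    have hM0 := hM ⟨0, mem_ball_self one_pos, rfl⟩
    rw [norm_zero, zero_pow two_ne_zero, sub_zero, one_mul] at hM0
    exact (by positivity : (0 : ℝ) ≤ ‖deriv h 0‖ + ‖deriv g 0‖).trans hM0
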